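/- arXiv:1903.04003 — 5 statements merged into one kernel-verified Lean document; each statement's English description precedes it below -/
import Mathlib

section
/- Let q : O → ℝ be a score function on a finite nonempty set O with values in [0,1], and let ε ≥ 0. Define the probability distribution P(o) = exp(ε·q(o)/2) / Σ_{o'∈O} exp(ε·q(o')/2). If q' : O → ℝ is another score function with values in [0,1] and P' is defined analogously from q', then for every o ∈ O, P(o) ≤ e^{ε} · P'(o). -/
/-- Core exponential-mechanism inequality: if `q, q' : O → [0,1]` are two score
functions on a finite nonempty set and `P, P'` are the corresponding
`softmax(ε·q/2)` distributions, then `P(o) ≤ e^ε · P'(o)` for every `o`. -/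
theorem exp_mechanism_ratio {O : Type*} [Fintype O] [Nonempty O]
    (q q' : O → ℝ) (hq : ∀ o, q o ∈ Set.Icc (0 : ℝ) 1)
    (hq' : ∀ o, q' o ∈ Set.Icc (0 : ℝ) 1) (ε : ℝ) (hε : 0 ≤ ε) :
    ∀ o : O,
      Real.exp (ε * q o / 2) / ∑ o' : O, Real.exp (ε * q o' / 2) ≤
        Real.exp ε *
          (Real.exp (ε * q' o / 2) / ∑ o' : O, Real.exp (ε * q' o' / 2)) := by
  intro o
  set S : ℝ := ∑ o' : O, Real.exp (ε * q o' / 2) with hS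
  set S' : ℝ := ∑ o' : O, Real.exp (ε * q' o' / 2) with hS'
  have hSpos : 0 < S := Finset.sum_pos (fun i _ => Real.exp_pos _) Finset.univ_nonempty
  have hS'pos : 0 < S' := Finset.sum_pos (fun i _ => Real.exp_pos _) Finset.univ_nonempty
  have hA : Real.exp (ε * q o / 2) ≤ Real.exp (ε / 2) * Real.exp (ε * q' o / 2) := by
    rw [← Real.exp_add]
    apply Real.exp_le_exp.2
    have h1 := (hq o).2
    have h2 := (hq' o).1
    nlinarith
  have hSle : S' ≤ Real.exp (ε / 2) * S := by
    rw [Finset.mul_sum]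
    apply Finset.sum_le_sum
    intro i _
    rw [← Real.exp_add]
    apply Real.exp_le_exp.2
    have h1 := (hq' i).2
    have h2 := (hq i).1
    nlinarith
  rw [mul_div_assoc', div_le_div_iff₀ hSpos hS'pos]
  calc Real.exp (ε * q o / 2) * S'
      ≤ (Real.exp (ε / 2) * Real.exp (ε * q' o / 2)) * (Real.exp (ε / 2) * S) := by
        apply mul_le_mul hA hSle (le_of_lt hS'pos)
        positivity
    _ = Real.exp ε * Real.exp (ε * q' o / 2) * S := by
        rw [show (ε : ℝ) = ε / 2 + ε / 2 by ring, Real.exp_add]; ring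
end

section
/- Fix N ≥ 3, m ≥ 2, and B₂ ≥ 0. Suppose a split value is drawn from m candidate points lying in [0,1] according to a probability mass function p with 1/(1+(m-1)e^{B₂}) ≤ p(v) ≤ e^{B₂}/(e^{B₂}+(m-1)) for every candidate v. If the candidate points are equally spaced (the i-th point is i/(m+1)), then the probability that the selected point lies in the middle region [1/N, (N-1)/N] is at least ((N-2)/N)·e^{-2B₂} − o(1) as m → ∞; in particular, for every δ > 0 there exists m₀ such that for m ≥ m₀ this probability is at least ((N-2)/N)e^{-2B₂} − δ. -/
/-!
Every candidate has probability at least `1 / (1 + (m - 1) e^{B₂}) ≥ e^{-B₂} / m`, and at least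
`((N - 2) / N) (m + 1) - 1` of the points `i / (m + 1)` lie in `[1/N, (N-1)/N]`. Hence the middle
region carries mass at least `((N - 2) / N) e^{-B₂} - e^{-B₂} / m`, which exceeds
`((N - 2) / N) e^{-2B₂} - δ` as soon as `1 / m < δ`.
-/

open Finset

theorem exp_neg_div_le_one_div_one_add_mul_exp {B : ℝ} (hB : 0 ≤ B) {m : ℝ} (hm : 1 ≤ m) :
    Real.exp (-B) / m ≤ 1 / (1 + (m - 1) * Real.exp B) := by
  have hE := Real.one_le_exp hB
  rw [Real.exp_neg, div_eq_mul_one_div, ← one_div, div_mul_div_comm, one_mul]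
  gcongr
  nlinarith

theorem sub_one_le_card_filter_equispaced (m : ℕ) {α β : ℝ} (hα : 0 < α) (hβ : β < 1) :
    (β - α) * (m + 1) - 1 ≤
      (#{i : Fin m | α ≤ ((i : ℕ) + 1) / ((m : ℝ) + 1) ∧
        ((i : ℕ) + 1) / ((m : ℝ) + 1) ≤ β} : ℝ) := by
  set S : Finset (Fin m) := {i : Fin m | α ≤ ((i : ℕ) + 1) / ((m : ℝ) + 1) ∧
    ((i : ℕ) + 1) / ((m : ℝ) + 1) ≤ β}
  have hm : (0 : ℝ) < m + 1 := by positivity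
  set c := ⌈α * (m + 1)⌉₊
  set f := ⌊β * (m + 1)⌋₊
  have hc : 1 ≤ c := Nat.one_le_iff_ne_zero.2 (Nat.ceil_pos.2 (by positivity)).ne'
  have hfm : f < m + 1 := (Nat.floor_lt' (by omega)).2 (by push_cast; nlinarith)
  -- `i ∈ S` as soon as `c ≤ i + 1 ≤ f`
  have hsub : Ico (c - 1) f ⊆ S.map Fin.valEmbedding := by
    intro k hk
    rw [mem_Ico] at hk
    refine mem_map.2 ⟨⟨k, by omega⟩, mem_filter.2 ⟨mem_univ _, ?_, ?_⟩, rfl⟩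
    · rw [le_div_iff₀ hm]
      exact_mod_cast Nat.ceil_le.1 (by omega : c ≤ k + 1)
    · rw [div_le_iff₀ hm]
      exact_mod_cast (Nat.le_floor_iff' (by omega)).1 (by omega : k + 1 ≤ f)
  have hcard := card_le_card hsub
  rw [card_map, Nat.card_Ico] at hcard
  have hcount : ((f + 1 : ℕ) : ℝ) ≤ ((#S + c : ℕ) : ℝ) := by exact_mod_cast (by omega)
  push_cast at hcount
  have := Nat.lt_floor_add_one (β * (m + 1))
  have := Nat.ceil_lt_add_one (R := ℝ) (by positivity : 0 ≤ α * (m + 1))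
  linarith

/-- Lemma 4 of the MRF paper: for any distribution over `m` equally spaced split
candidates whose point probabilities obey the exponential-mechanism bounds, the
mass of the middle region `[1/N, (N-1)/N]` is asymptotically at least
`((N-2)/N)·e^{-2B₂}`. -/
theorem middle_region_mass (N : ℕ) (hN : 3 ≤ N) (B₂ : ℝ) (hB : 0 ≤ B₂)
    (δ : ℝ) (hδ : 0 < δ) :
    ∃ m₀ : ℕ, ∀ m : ℕ, m₀ ≤ m → 2 ≤ m →
      ∀ p : Fin m → ℝ,
        (∀ v, 1 / (1 + ((m : ℝ) - 1) * Real.exp B₂) ≤ p v ∧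
          p v ≤ Real.exp B₂ / (Real.exp B₂ + ((m : ℝ) - 1))) →
        (∑ v : Fin m, p v = 1) →
        ((N : ℝ) - 2) / N * Real.exp (-(2 * B₂)) - δ ≤
          ∑ v ∈ Finset.univ.filter (fun i : Fin m =>
            (1 : ℝ) / N ≤ ((i : ℕ) + 1) / ((m : ℝ) + 1) ∧
            ((i : ℕ) + 1) / ((m : ℝ) + 1) ≤ ((N : ℝ) - 1) / N), p v := by
  obtain ⟨m₀, hm₀⟩ := exists_nat_gt (1 / δ)
  refine ⟨m₀, fun m hm₀m hm p hp _ => ?_⟩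
  have hNR : (3 : ℝ) ≤ N := by exact_mod_cast hN
  have hmR : (2 : ℝ) ≤ m := by exact_mod_cast hm
  have hmδ : 1 / (m : ℝ) < δ :=
    (one_div_lt (by positivity) hδ).2 (hm₀.trans_le (by exact_mod_cast hm₀m))
  have hexp : Real.exp (-(2 * B₂)) ≤ Real.exp (-B₂) := Real.exp_le_exp.2 (by linarith)
  have hexp_div : Real.exp (-B₂) / m ≤ 1 / m := by
    gcongr
    exact Real.exp_le_one_iff.2 (by linarith)
  have hcount := sub_one_le_card_filter_equispaced m (α := 1 / N) (β := (N - 1) / N)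
    (by positivity) ((div_lt_one (by positivity)).2 (by linarith))
  rw [← sub_div, sub_sub, one_add_one_eq_two] at hcount
  refine le_trans ?_ (card_nsmul_le_sum _ p _ fun v _ =>
    (exp_neg_div_le_one_div_one_add_mul_exp hB (by linarith)).trans (hp v).1)
  rw [nsmul_eq_mul]
  have hc : 0 ≤ ((N : ℝ) - 2) / N := div_nonneg (by linarith) (by positivity)
  calc ((N : ℝ) - 2) / N * Real.exp (-(2 * B₂)) - δ
      ≤ (N - 2) / N * Real.exp (-B₂) - Real.exp (-B₂) / m := by gcongr; linarith
    _ = ((N - 2) / N * m - 1) * (Real.exp (-B₂) / m) := by field_simp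
    _ ≤ _ * (Real.exp (-B₂) / m) := by gcongr; nlinarith
end

section
/- Suppose a randomized forest consists of t trees, each tree built on an independent partition of the data. For each tree: the structure-building phase consists of d layers, each layer applying two mechanisms on the structure subset D^S with privacy budgets B₁ and B₂ (sequential composition within a layer and across layers), and the prediction phase applies mechanisms with budget B₃ on disjoint leaf cells of the estimation subset D^E (parallel composition). If D^S and D^E are disjoint, the total privacy budget of one tree is max(d(B₁+B₂), B₃), and the total budget of the forest is t·max(d(B₁+B₂), B₃). In particular, if B₁ + B₂ = ε/(d·t) and B₃ = ε/t, the forest satisfies ε-differential privacy. -/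
/-- Privacy budget of the MRF (Theorem 2): a forest of `t` trees, each built on
its own partition of the data into a structure part `D^S` and an estimation
part `D^E`; each tree uses `d` layers with two mechanisms of budgets `B₁, B₂`
on `D^S` (sequential composition), and a prediction mechanism of budget `B₃`
on `D^E` (parallel to the structure phase since `D^S, D^E` are disjoint).
The forest satisfies `t·max(d(B₁+B₂), B₃)`-DP; in particular, with
`B₁+B₂ = ε/(d·t)` and `B₃ = ε/t` it satisfies `ε`-DP. -/
theorem mrf_privacy {Dset DS DE : Type*}
    (neighbor : Dset → Dset → Prop) (neighborS : DS → DS → Prop)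
    (neighborE : DE → DE → Prop)
    (t d : ℕ) (ht : 0 < t) (hd : 0 < d)
    (split : Fin t → Dset → DS × DE)
    (hsplit : ∀ i D D', neighbor D D' →
      (neighborS (split i D).1 (split i D').1 ∧ (split i D).2 = (split i D').2) ∨
      ((split i D).1 = (split i D').1 ∧ neighborE (split i D).2 (split i D').2))
    (O1 O2 : Fin t → Fin d → Type*) (Q : Fin t → Type*)
    (M1 : ∀ i l, DS → O1 i l → ℝ) (M2 : ∀ i l, DS → O2 i l → ℝ)
    (P : ∀ i, DE → Q i → ℝ)
    (B₁ B₂ B₃ : ℝ) (hB₁ : 0 ≤ B₁) (hB₂ : 0 ≤ B₂) (hB₃ : 0 ≤ B₃)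
    (hM1nn : ∀ i l S o, 0 ≤ M1 i l S o) (hM2nn : ∀ i l S o, 0 ≤ M2 i l S o)
    (hPnn : ∀ i E o, 0 ≤ P i E o)
    (hM1 : ∀ i l S S', neighborS S S' → ∀ o, M1 i l S o ≤ Real.exp B₁ * M1 i l S' o)
    (hM2 : ∀ i l S S', neighborS S S' → ∀ o, M2 i l S o ≤ Real.exp B₂ * M2 i l S' o)
    (hP : ∀ i E E', neighborE E E' → ∀ o, P i E o ≤ Real.exp B₃ * P i E' o)
    (D D' : Dset) (hDD' : neighbor D D')
    (o1 : ∀ i l, O1 i l) (o2 : ∀ i l, O2 i l) (q : ∀ i, Q i) :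
    (∏ i : Fin t,
        ((∏ l : Fin d, M1 i l (split i D).1 (o1 i l) * M2 i l (split i D).1 (o2 i l)) *
          P i (split i D).2 (q i))) ≤
      Real.exp ((t : ℝ) * max ((d : ℝ) * (B₁ + B₂)) B₃) *
        ∏ i : Fin t,
          ((∏ l : Fin d, M1 i l (split i D').1 (o1 i l) * M2 i l (split i D').1 (o2 i l)) *
            P i (split i D').2 (q i)) ∧
    ∀ ε : ℝ, B₁ + B₂ = ε / (d * t) → B₃ = ε / t →
      (∏ i : Fin t,
          ((∏ l : Fin d, M1 i l (split i D).1 (o1 i l) * M2 i l (split i D).1 (o2 i l)) *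
            P i (split i D).2 (q i))) ≤
        Real.exp ε *
          ∏ i : Fin t,
            ((∏ l : Fin d, M1 i l (split i D').1 (o1 i l) * M2 i l (split i D').1 (o2 i l)) *
              P i (split i D').2 (q i)) := by
  set M : ℝ := max ((d : ℝ) * (B₁ + B₂)) B₃ with hM
  set F : Fin t → ℝ := fun i =>
    (∏ l : Fin d, M1 i l (split i D).1 (o1 i l) * M2 i l (split i D).1 (o2 i l)) *
      P i (split i D).2 (q i) with hF
  set G : Fin t → ℝ := fun i =>
    (∏ l : Fin d, M1 i l (split i D').1 (o1 i l) * M2 i l (split i D').1 (o2 i l)) *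
      P i (split i D').2 (q i) with hG
  have hFnn : ∀ i, 0 ≤ F i := fun i =>
    mul_nonneg (Finset.prod_nonneg fun l _ => mul_nonneg (hM1nn _ _ _ _) (hM2nn _ _ _ _))
      (hPnn _ _ _)
  have hGnn : ∀ i, 0 ≤ G i := fun i =>
    mul_nonneg (Finset.prod_nonneg fun l _ => mul_nonneg (hM1nn _ _ _ _) (hM2nn _ _ _ _))
      (hPnn _ _ _)
  have hGSnn : ∀ i, 0 ≤ ∏ l : Fin d,
      M1 i l (split i D').1 (o1 i l) * M2 i l (split i D').1 (o2 i l) := fun i =>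
    Finset.prod_nonneg fun l _ => mul_nonneg (hM1nn _ _ _ _) (hM2nn _ _ _ _)
  have hkey : ∀ i, F i ≤ Real.exp M * G i := by
    intro i
    rcases hsplit i D D' hDD' with ⟨hS, hE⟩ | ⟨hS, hE⟩
    · -- structure parts neighbor, estimation parts equal
      have hprod : (∏ l : Fin d, M1 i l (split i D).1 (o1 i l) * M2 i l (split i D).1 (o2 i l))
          ≤ Real.exp ((d : ℝ) * (B₁ + B₂)) *
            ∏ l : Fin d, M1 i l (split i D').1 (o1 i l) * M2 i l (split i D').1 (o2 i l) := by
        calc (∏ l : Fin d, M1 i l (split i D).1 (o1 i l) * M2 i l (split i D).1 (o2 i l))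
            ≤ ∏ l : Fin d, Real.exp (B₁ + B₂) *
                (M1 i l (split i D').1 (o1 i l) * M2 i l (split i D').1 (o2 i l)) := by
              refine Finset.prod_le_prod (fun l _ => mul_nonneg (hM1nn _ _ _ _) (hM2nn _ _ _ _))
                (fun l _ => ?_)
              have h1 := hM1 i l _ _ hS (o1 i l)
              have h2 := hM2 i l _ _ hS (o2 i l)
              calc M1 i l (split i D).1 (o1 i l) * M2 i l (split i D).1 (o2 i l)
                  ≤ (Real.exp B₁ * M1 i l (split i D').1 (o1 i l)) *
                    (Real.exp B₂ * M2 i l (split i D').1 (o2 i l)) :=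
                    mul_le_mul h1 h2 (hM2nn _ _ _ _)
                      (mul_nonneg (Real.exp_pos _).le (hM1nn _ _ _ _))
                _ = Real.exp (B₁ + B₂) *
                    (M1 i l (split i D').1 (o1 i l) * M2 i l (split i D').1 (o2 i l)) := by
                    rw [Real.exp_add]; ring
          _ = Real.exp ((d : ℝ) * (B₁ + B₂)) *
              ∏ l : Fin d, M1 i l (split i D').1 (o1 i l) * M2 i l (split i D').1 (o2 i l) := by
              rw [Finset.prod_mul_distrib, Finset.prod_const, Finset.card_univ,
                Fintype.card_fin, ← Real.exp_nat_mul]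
      calc F i ≤ (Real.exp ((d : ℝ) * (B₁ + B₂)) *
            ∏ l : Fin d, M1 i l (split i D').1 (o1 i l) * M2 i l (split i D').1 (o2 i l)) *
            P i (split i D).2 (q i) :=
            mul_le_mul_of_nonneg_right hprod (hPnn _ _ _)
        _ ≤ (Real.exp M *
            ∏ l : Fin d, M1 i l (split i D').1 (o1 i l) * M2 i l (split i D').1 (o2 i l)) *
            P i (split i D).2 (q i) := by
            refine mul_le_mul_of_nonneg_right (mul_le_mul_of_nonneg_right ?_ (hGSnn i))
              (hPnn _ _ _)
            exact Real.exp_le_exp.mpr (le_max_left _ _)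
        _ = Real.exp M * G i := by rw [hE]; ring
    · -- structure parts equal, estimation parts neighbor
      have hp := hP i _ _ hE (q i)
      calc F i ≤ (∏ l : Fin d, M1 i l (split i D).1 (o1 i l) * M2 i l (split i D).1 (o2 i l)) *
            (Real.exp B₃ * P i (split i D').2 (q i)) := by
            refine mul_le_mul_of_nonneg_left hp ?_
            exact Finset.prod_nonneg fun l _ => mul_nonneg (hM1nn _ _ _ _) (hM2nn _ _ _ _)
        _ ≤ (∏ l : Fin d, M1 i l (split i D).1 (o1 i l) * M2 i l (split i D).1 (o2 i l)) *
            (Real.exp M * P i (split i D').2 (q i)) := by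
            refine mul_le_mul_of_nonneg_left
              (mul_le_mul_of_nonneg_right ?_ (hPnn _ _ _)) ?_
            · exact Real.exp_le_exp.mpr (le_max_right _ _)
            · exact Finset.prod_nonneg fun l _ => mul_nonneg (hM1nn _ _ _ _) (hM2nn _ _ _ _)
        _ = Real.exp M * G i := by rw [hS]; ring
  have hmain : (∏ i : Fin t, F i) ≤ Real.exp ((t : ℝ) * M) * ∏ i : Fin t, G i := by
    calc (∏ i : Fin t, F i) ≤ ∏ i : Fin t, Real.exp M * G i :=
          Finset.prod_le_prod (fun i _ => hFnn i) (fun i _ => hkey i)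
      _ = Real.exp ((t : ℝ) * M) * ∏ i : Fin t, G i := by
          rw [Finset.prod_mul_distrib, Finset.prod_const, Finset.card_univ,
            Fintype.card_fin, ← Real.exp_nat_mul]
  refine ⟨hmain, fun ε h12 h3 => ?_⟩
  have hdt : ((d : ℝ) * (B₁ + B₂)) = ε / t := by
    rw [h12]; field_simp
  have heq : (t : ℝ) * M = ε := by
    rw [hM, hdt, h3, max_self]
    field_simp
  rw [heq] at hmain
  exact hmain
end

section
/- Let h⁽¹⁾, ..., h⁽ᴹ⁾ be i.i.d. randomized classifiers taking values in {1,...,K}, each (as a sequence in n) consistent for a distribution of (X,Y), i.e., Pr(h(X,Z,D_n) ≠ Y) → L* where L* is the Bayes risk. Then the majority-vote classifier h̄⁽ᴹ⁾(x) = argmax_c Σ_{i=1}^M 1[h⁽ⁱ⁾(x) = c] is also consistent: Pr(h̄⁽ᴹ⁾(X) ≠ Y) → L* as n → ∞, for any fixed M. -/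
/-!
Predicting class `c` at `x` errs with conditional probability `P(Y ≠ c | X = x)`. Since the
randomization is independent of `(X, Y)`, the error of any randomized classifier is the error of
a pointwise minimizer `g⋆` of this conditional error plus the integrated regret
`P(Y ≠ h | X) - P(Y ≠ g⋆ X | X) ≥ 0`. Consistency of the individual classifiers identifies `L*`
with the error of `g⋆` and makes their regrets tend to zero. The winning class of a vote gets at
least `M / K` of the `M` votes, so pointwise `M · regret(majority) ≤ K · ∑ᵢ regret(hᵢ)`, and the
regret of the majority vote tends to zero as well.
-/

open MeasureTheory

/-- Majority vote over `M` votes in `{1,...,K}`: a class with maximal count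
(ties broken by taking the smallest such class). -/
noncomputable def majorityVote {M K : ℕ} [NeZero K] (v : Fin M → Fin K) : Fin K :=
  ((Finset.univ : Finset (Fin K)).filter (fun c =>
      ∀ c', (Finset.univ.filter (fun i => v i = c')).card ≤
        (Finset.univ.filter (fun i => v i = c)).card)).min'
    (by
      obtain ⟨c, -, hc⟩ := Finset.exists_max_image (Finset.univ : Finset (Fin K))
        (fun c => (Finset.univ.filter (fun i => v i = c)).card)
        ⟨0, Finset.mem_univ 0⟩
      exact ⟨c, Finset.mem_filter.mpr
        ⟨Finset.mem_univ _, fun c' => hc c' (Finset.mem_univ c')⟩⟩)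

open Filter Topology ProbabilityTheory Finset
open scoped ENNReal

theorem exists_measurable_argmin {α ι β : Type*} [MeasurableSpace α] [MeasurableSpace ι]
    [Finite ι] [Nonempty ι] [LinearOrder β] [TopologicalSpace β] [OrderClosedTopology β]
    [SecondCountableTopology β] [MeasurableSpace β] [OpensMeasurableSpace β]
    {F : ι → α → β} (hF : ∀ i, Measurable (F i)) :
    ∃ g : α → ι, Measurable g ∧ ∀ x i, F (g x) x ≤ F i x := by
  set isMin : α → ι → Prop := fun x i => ∀ j, F i x ≤ F j x
  have hisMin : Measurable isMin := measurable_pi_lambda _ fun i =>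
    measurableSet_setOfPred.mp <| by
      simpa only [isMin, Set.ofPred_forall] using
        MeasurableSet.iInter fun j => measurableSet_le (hF i) (hF j)
  -- any choice function on the finite type `ι → Prop` of minimizer sets is measurable
  exact ⟨fun x => Classical.epsilon (isMin x),
    (measurable_of_finite (Classical.epsilon : (ι → Prop) → ι)).comp hisMin,
    fun x => Classical.epsilon_spec (Finite.exists_min (F · x))⟩

theorem Measurable.apply_of_countable {α ι β : Type*} [MeasurableSpace α] [MeasurableSpace ι]
    [MeasurableSpace β] [Countable ι] [MeasurableSingletonClass ι] {F : α → ι → β}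
    (hF : ∀ i, Measurable (F · i)) {f : α → ι} (hf : Measurable f) :
    Measurable fun x => F x (f x) :=
  (measurable_from_prod_countable_left (f := fun p : α × ι => F p.1 p.2) hF).comp
    (measurable_id.prodMk hf)

section MajorityVote

variable {M K : ℕ} [NeZero K]

theorem card_filter_le_card_filter_majorityVote (v : Fin M → Fin K) (c : Fin K) :
    #{i | v i = c} ≤ #{i | v i = majorityVote v} := by
  have h : majorityVote v ∈ ({c | ∀ c', #{i | v i = c'} ≤ #{i | v i = c}} : Finset (Fin K)) :=
    min'_mem _ _
  exact (mem_filter.mp h).2 c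

theorem le_mul_card_filter_majorityVote (v : Fin M → Fin K) :
    M ≤ K * #{i | v i = majorityVote v} := by
  calc M = ∑ c, #{i | v i = c} := by
        simpa using card_eq_sum_card_fiberwise (s := univ) fun i _ => mem_univ (v i)
    _ ≤ K * #{i | v i = majorityVote v} := by
        simpa using sum_le_card_nsmul univ _ _ fun c _ =>
          card_filter_le_card_filter_majorityVote v c

/-- Every voter for the winning class contributes `φ` of that class to the sum, and the winner
has at least `M / K` voters. -/
theorem natCast_mul_apply_majorityVote_le (v : Fin M → Fin K) (φ : Fin K → ℝ≥0∞) :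
    (M : ℝ≥0∞) * φ (majorityVote v) ≤ K * ∑ i, φ (v i) := by
  set m := majorityVote v
  calc (M : ℝ≥0∞) * φ m ≤ K * (#{i | v i = m} * φ m) := by
        rw [← mul_assoc]; gcongr; exact_mod_cast le_mul_card_filter_majorityVote v
    _ = K * ∑ i with v i = m, φ (v i) := by
        rw [sum_congr rfl fun i hi => by rw [(mem_filter.mp hi).2], sum_const, nsmul_eq_mul]
    _ ≤ K * ∑ i, φ (v i) := by gcongr; exact filter_subset _ _

end MajorityVote

theorem ENNReal.tendsto_zero_of_mul_le_mul_sum {ι β : Type*} [Fintype ι] {l : Filter β}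
    {c C : ℝ≥0∞} (hc₀ : c ≠ 0) (hc : c ≠ ⊤) (hC : C ≠ ⊤) {a : β → ℝ≥0∞} {b : ι → β → ℝ≥0∞}
    (hab : ∀ n, c * a n ≤ C * ∑ i, b i n) (hb : ∀ i, Tendsto (b i) l (𝓝 0)) :
    Tendsto a l (𝓝 0) := by
  have hsum : Tendsto (fun n => C * ∑ i, b i n) l (𝓝 0) := by
    simpa using ENNReal.Tendsto.const_mul (tendsto_finsetSum _ fun i _ => hb i) (Or.inr hC)
  have hca : Tendsto (fun n => c * a n) l (𝓝 0) :=
    tendsto_of_tendsto_of_tendsto_of_le_of_le tendsto_const_nhds hsum (fun _ => zero_le) hab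
  simpa [← mul_assoc, ENNReal.inv_mul_cancel hc₀ hc] using
    ENNReal.Tendsto.const_mul hca (Or.inr (ENNReal.inv_ne_top.mpr hc₀)) (a := c⁻¹)

theorem ENNReal.tendsto_toReal_const_add_iff {ι : Type*} {l : Filter ι} {a : ℝ≥0∞}
    (ha : a ≠ ⊤) {f : ι → ℝ≥0∞} (hf : ∀ i, a + f i ≠ ⊤) :
    Tendsto (fun i => (a + f i).toReal) l (𝓝 a.toReal) ↔ Tendsto f l (𝓝 0) := by
  rw [ENNReal.tendsto_toReal_iff hf ha]
  constructor
  · intro h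
    simpa [ENNReal.add_sub_cancel_left ha] using
      ENNReal.Tendsto.sub h tendsto_const_nhds (Or.inr ha)
  · intro h
    simpa using tendsto_const_nhds.add h

theorem ENNReal.tendsto_toReal_const_add_of_mul_le_mul_sum {ι β : Type*} [Fintype ι]
    {l : Filter β} {L c C : ℝ≥0∞} (hL : L ≠ ⊤) (hc₀ : c ≠ 0) (hc : c ≠ ⊤) (hC : C ≠ ⊤)
    {a : β → ℝ≥0∞} {b : ι → β → ℝ≥0∞} (ha : ∀ n, L + a n ≠ ⊤) (hb : ∀ i n, L + b i n ≠ ⊤)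
    (hab : ∀ n, c * a n ≤ C * ∑ i, b i n)
    (hlim : ∀ i, Tendsto (fun n => (L + b i n).toReal) l (𝓝 L.toReal)) :
    Tendsto (fun n => (L + a n).toReal) l (𝓝 L.toReal) :=
  (tendsto_toReal_const_add_iff hL ha).mpr <| tendsto_zero_of_mul_le_mul_sum hc₀ hc hC hab
    fun i => (tendsto_toReal_const_add_iff hL (hb i)).mp (hlim i)

section Disintegration

variable {Ω E R 𝒴 : Type*} [MeasurableSpace Ω] [MeasurableSpace E] [MeasurableSpace R]
  [MeasurableSpace 𝒴] [StandardBorelSpace 𝒴] [Nonempty 𝒴]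

theorem MeasureTheory.Measure.measure_ne_eq_lintegral_condKernel (ρ : Measure (E × 𝒴))
    [IsFiniteMeasure ρ] {f : E → 𝒴} (hf : Measurable f) :
    ρ {q | f q.1 ≠ q.2} = ∫⁻ x, ρ.condKernel x {f x}ᶜ ∂ρ.fst := by
  rw [← Measure.lintegral_condKernel_mem (s := {q | f q.1 ≠ q.2})
    (measurableSet_eq_fun (hf.comp measurable_fst) measurable_snd).compl]
  simp only [Set.mem_ofPred_eq, ne_comm, Set.compl_def, Set.mem_singleton_iff]

variable [Countable 𝒴]

theorem measurable_condKernel_compl_apply {ρ : Measure (E × 𝒴)} [IsFiniteMeasure ρ]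
    {α : Type*} [MeasurableSpace α] {f : α → E} (hf : Measurable f) {h : α → 𝒴}
    (hh : Measurable h) : Measurable fun a => ρ.condKernel (f a) {h a}ᶜ :=
  Measurable.apply_of_countable (fun c => (Kernel.measurable_coe _
    (measurableSet_singleton c).compl).comp hf) hh

/-- Predicting `c` at `x` costs `ρ.condKernel x {c}ᶜ`; `ξ` is the joint law of the feature and
the randomization of `h`. -/
noncomputable def excessRisk (ρ : Measure (E × 𝒴)) [IsFiniteMeasure ρ] (ξ : Measure (E × R))
    (g : E → 𝒴) (h : E × R → 𝒴) : ℝ≥0∞ :=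
  ∫⁻ p, (ρ.condKernel p.1 {h p}ᶜ - ρ.condKernel p.1 {g p.1}ᶜ) ∂ξ

theorem natCast_mul_excessRisk_majorityVote_le {M K : ℕ} [NeZero K]
    (ρ : Measure (E × Fin K)) [IsFiniteMeasure ρ] (ξ : Measure (E × R)) {g : E → Fin K}
    (hg : Measurable g) {v : E × R → Fin M → Fin K} (hv : ∀ i, Measurable (v · i)) :
    (M : ℝ≥0∞) * excessRisk ρ ξ g (fun p => majorityVote (v p)) ≤
      K * ∑ i, excessRisk ρ ξ g (v · i) := by
  calc (M : ℝ≥0∞) * excessRisk ρ ξ g (fun p => majorityVote (v p))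
      = ∫⁻ p, M * (ρ.condKernel p.1 {majorityVote (v p)}ᶜ - ρ.condKernel p.1 {g p.1}ᶜ) ∂ξ :=
        (lintegral_const_mul' _ _ (by simp)).symm
    _ ≤ ∫⁻ p, K * ∑ i, (ρ.condKernel p.1 {v p i}ᶜ - ρ.condKernel p.1 {g p.1}ᶜ) ∂ξ :=
        lintegral_mono fun p => natCast_mul_apply_majorityVote_le (v p)
          fun c => ρ.condKernel p.1 {c}ᶜ - ρ.condKernel p.1 {g p.1}ᶜ
    _ = K * ∑ i, excessRisk ρ ξ g (v · i) := by
        have hregret i : Measurable fun p =>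
            ρ.condKernel p.1 {v p i}ᶜ - ρ.condKernel p.1 {g p.1}ᶜ :=
          (measurable_condKernel_compl_apply measurable_fst (hv i)).sub
            (measurable_condKernel_compl_apply measurable_fst (hg.comp measurable_fst))
        rw [lintegral_const_mul' _ _ (by simp), lintegral_finsetSum _ fun i _ => hregret i]
        rfl

variable {μ : Measure Ω} [IsFiniteMeasure μ] {X : Ω → E} {Y : Ω → 𝒴} {W : Ω → R}

theorem ProbabilityTheory.IndepFun.measure_ne_eq_lintegral_condKernel (hX : Measurable X)
    (hY : Measurable Y) (hW : Measurable W) (hind : IndepFun (fun ω => (X ω, Y ω)) W μ)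
    {h : E × R → 𝒴} (hh : Measurable h) :
    μ {ω | h (X ω, W ω) ≠ Y ω} = ∫⁻ p, (μ.map fun ω => (X ω, Y ω)).condKernel p.1 {h p}ᶜ
      ∂(μ.map X).prod (μ.map W) := by
  set ρ := μ.map fun ω => (X ω, Y ω)
  have hS : MeasurableSet {r : (E × 𝒴) × R | h (r.1.1, r.2) ≠ r.1.2} :=
    (measurableSet_eq_fun (hh.comp (measurable_fst.fst.prodMk measurable_snd))
      measurable_fst.snd).compl
  calc μ {ω | h (X ω, W ω) ≠ Y ω}
      = μ.map (fun ω => ((X ω, Y ω), W ω)) {r | h (r.1.1, r.2) ≠ r.1.2} :=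
        (Measure.map_apply ((hX.prodMk hY).prodMk hW) hS).symm
    _ = ∫⁻ w, ρ {q | h (q.1, w) ≠ q.2} ∂(μ.map W) := by
        rw [(indepFun_iff_map_prod_eq_prod_map_map (hX.prodMk hY).aemeasurable
          hW.aemeasurable).mp hind, Measure.prod_apply_symm hS]
        rfl
    _ = ∫⁻ w, ∫⁻ x, ρ.condKernel x {h (x, w)}ᶜ ∂ρ.fst ∂(μ.map W) := by
        congr with w
        exact ρ.measure_ne_eq_lintegral_condKernel
          (hh.comp (measurable_id.prodMk measurable_const))
    _ = _ := by
        rw [Measure.fst_map_prodMk hY]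
        exact (lintegral_prod_symm' (fun p => ρ.condKernel p.1 {h p}ᶜ)
          (measurable_condKernel_compl_apply measurable_fst hh)).symm

theorem ProbabilityTheory.IndepFun.measure_ne_eq_add_excessRisk (hX : Measurable X)
    (hY : Measurable Y) (hW : Measurable W) (hind : IndepFun (fun ω => (X ω, Y ω)) W μ)
    {g : E → 𝒴} (hg : Measurable g)
    (hgmin : ∀ x c, (μ.map fun ω => (X ω, Y ω)).condKernel x {g x}ᶜ ≤
      (μ.map fun ω => (X ω, Y ω)).condKernel x {c}ᶜ)
    {h : E × R → 𝒴} (hh : Measurable h) :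
    μ {ω | h (X ω, W ω) ≠ Y ω} = μ {ω | g (X ω) ≠ Y ω} +
      excessRisk (μ.map fun ω => (X ω, Y ω)) ((μ.map X).prod (μ.map W)) g h := by
  rw [hind.measure_ne_eq_lintegral_condKernel hX hY hW hh,
    show {ω | g (X ω) ≠ Y ω} = {ω | (g ∘ Prod.fst) (X ω, W ω) ≠ Y ω} from rfl,
    hind.measure_ne_eq_lintegral_condKernel hX hY hW (hg.comp measurable_fst), excessRisk]
  simp only [Function.comp_apply]
  rw [← lintegral_add_left (measurable_condKernel_compl_apply measurable_fst
    (h := fun p => g p.1) (hg.comp measurable_fst))]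
  congr with p
  exact (add_tsub_cancel_of_le (hgmin p.1 (h p))).symm

end Disintegration

theorem majority_vote_consistent_general {Ω E ZS : Type*} [MeasurableSpace Ω]
    [MeasurableSpace E] [MeasurableSpace ZS]
    (μ : Measure Ω) [IsProbabilityMeasure μ]
    (K : ℕ) [NeZero K] (M : ℕ) (hM : 0 < M)
    (X : Ω → E) (Y : Ω → Fin K) (Z : Fin M → Ω → ZS)
    (hX : Measurable X) (hY : Measurable Y) (hZ : ∀ i, Measurable (Z i))
    (hZXY : ProbabilityTheory.IndepFun (fun ω => (X ω, Y ω))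
      (fun ω => fun i => Z i ω) μ)
    (g : ℕ → E → ZS → Fin K)
    (hg : ∀ n, Measurable (fun p : E × ZS => g n p.1 p.2))
    (Lstar : ℝ)
    (hBayes : ∀ f : E → Fin K, Measurable f →
      Lstar ≤ (μ {ω | f (X ω) ≠ Y ω}).toReal)
    (hcons : ∀ i : Fin M,
      Filter.Tendsto (fun n => (μ {ω | g n (X ω) (Z i ω) ≠ Y ω}).toReal)
        Filter.atTop (nhds Lstar)) :
    Filter.Tendsto
      (fun n =>
        (μ {ω | majorityVote (fun i => g n (X ω) (Z i ω)) ≠ Y ω}).toReal)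
      Filter.atTop (nhds Lstar) := by
  set ρ := μ.map fun ω => (X ω, Y ω)
  set ξ := (μ.map X).prod (μ.map fun ω i => Z i ω)
  obtain ⟨gBayes, hgBayes, hmin⟩ := exists_measurable_argmin
    (F := fun c x => ρ.condKernel x {c}ᶜ) fun c =>
      measurable_condKernel_compl_apply measurable_id measurable_const
  set L := μ {ω | gBayes (X ω) ≠ Y ω}
  have hW : Measurable fun ω i => Z i ω := measurable_pi_lambda _ hZ
  have hvote n i : Measurable fun p : E × (Fin M → ZS) => g n p.1 (p.2 i) :=
    (hg n).comp (measurable_fst.prodMk ((measurable_pi_apply i).comp measurable_snd))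
  have herr_vote (n i) : μ {ω | g n (X ω) (Z i ω) ≠ Y ω} =
      L + excessRisk ρ ξ gBayes fun p => g n p.1 (p.2 i) :=
    hZXY.measure_ne_eq_add_excessRisk hX hY hW hgBayes hmin (hvote n i)
  have herr_majority (n) : μ {ω | majorityVote (fun i => g n (X ω) (Z i ω)) ≠ Y ω} =
      L + excessRisk ρ ξ gBayes fun p => majorityVote fun i => g n p.1 (p.2 i) :=
    hZXY.measure_ne_eq_add_excessRisk hX hY hW hgBayes hmin
      ((measurable_of_finite majorityVote).comp (measurable_pi_lambda _ (hvote n)))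
  have hLstar : Lstar = L.toReal :=
    le_antisymm (hBayes gBayes hgBayes) <| ge_of_tendsto' (hcons ⟨0, hM⟩) fun n =>
      ENNReal.toReal_mono (measure_ne_top _ _) ((herr_vote n ⟨0, hM⟩).trans_ge le_self_add)
  simp only [herr_majority, hLstar]
  exact ENNReal.tendsto_toReal_const_add_of_mul_le_mul_sum (measure_ne_top _ _) (c := M)
    (by simpa using hM.ne') (by simp) (by simp) (fun n => herr_majority n ▸ measure_ne_top _ _)
    (fun i n => herr_vote n i ▸ measure_ne_top _ _)
    (fun n => natCast_mul_excessRisk_majorityVote_le ρ ξ hgBayes (hvote n))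
    fun i => by simpa only [herr_vote, hLstar] using hcons i

/-- Lemma 1 (Biau et al. 2008, Prop. 1): if the individual randomized
classifiers `g n (X, Z i)` (with i.i.d. randomizing variables `Z i`,
independent of `(X, Y)`) are consistent, i.e. their error probabilities tend
to the Bayes risk `L*`, then the majority-vote classifier over `M` copies is
consistent as well. -/
theorem majority_vote_consistent {Ω E ZS : Type*} [MeasurableSpace Ω]
    [MeasurableSpace E] [MeasurableSpace ZS]
    (μ : Measure Ω) [IsProbabilityMeasure μ]
    (K : ℕ) [NeZero K] (M : ℕ) (hM : 0 < M)
    (X : Ω → E) (Y : Ω → Fin K) (Z : Fin M → Ω → ZS)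
    (hX : Measurable X) (hY : Measurable Y) (hZ : ∀ i, Measurable (Z i))
    (hZindep : ProbabilityTheory.iIndepFun Z μ)
    (hZid : ∀ i j, ProbabilityTheory.IdentDistrib (Z i) (Z j) μ μ)
    (hZXY : ProbabilityTheory.IndepFun (fun ω => (X ω, Y ω))
      (fun ω => fun i => Z i ω) μ)
    (g : ℕ → E → ZS → Fin K)
    (hg : ∀ n, Measurable (fun p : E × ZS => g n p.1 p.2))
    (Lstar : ℝ)
    (hBayes : ∀ f : E → Fin K, Measurable f →
      Lstar ≤ (μ {ω | f (X ω) ≠ Y ω}).toReal)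
    (hcons : ∀ i : Fin M,
      Filter.Tendsto (fun n => (μ {ω | g n (X ω) (Z i ω) ≠ Y ω}).toReal)
        Filter.atTop (nhds Lstar)) :
    Filter.Tendsto
      (fun n =>
        (μ {ω | majorityVote (fun i => g n (X ω) (Z i ω)) ≠ Y ω}).toReal)
      Filter.atTop (nhds Lstar) :=
  majority_vote_consistent_general μ K M hM X Y Z hX hY hZ hZXY g hg Lstar hBayes hcons
end

section
/- Let O be a finite set and q : O → ℝ bounded with sensitivity Δq = max over neighboring dataset pairs and outputs of |q_D(o) − q_{D'}(o)|. The exponential mechanism that outputs o with probability exp(ε·q_D(o)/(2Δq)) / Σ_{o'} exp(ε·q_D(o')/(2Δq)) satisfies ε-differential privacy: for all neighboring D, D' and all o, Pr[M(D)=o] ≤ e^{ε}·Pr[M(D')=o]. -/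
/-- The exponential mechanism of McSherry–Talwar satisfies `ε`-differential
privacy: with score functions `q_D : O → ℝ` of sensitivity at most `Δq`
between neighboring datasets, outputting `o` with probability proportional to
`exp(ε q_D(o)/(2Δq))` satisfies `Pr[M(D)=o] ≤ e^ε Pr[M(D')=o]`. -/
theorem exponential_mechanism_dp {Dset : Type*} {O : Type*} [Fintype O]
    [Nonempty O]
    (neighbor : Dset → Dset → Prop)
    (q : Dset → O → ℝ) (Δq : ℝ) (hΔq : 0 < Δq)
    (hsens : ∀ D D', neighbor D D' → ∀ o, |q D o - q D' o| ≤ Δq)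
    (ε : ℝ) (hε : 0 ≤ ε) :
    ∀ D D', neighbor D D' → ∀ o : O,
      Real.exp (ε * q D o / (2 * Δq)) /
          ∑ o' : O, Real.exp (ε * q D o' / (2 * Δq)) ≤
        Real.exp ε *
          (Real.exp (ε * q D' o / (2 * Δq)) /
            ∑ o' : O, Real.exp (ε * q D' o' / (2 * Δq))) := by
  intro D D' hDD' o
  have key : ∀ a b : O, q D a = q D b ∨ True := fun _ _ => Or.inr trivial
  -- pointwise bound: exp(ε q_D(x)/(2Δq)) ≤ exp(ε/2) * exp(ε q_{D'}(x)/(2Δq))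
  have pt : ∀ x : O, Real.exp (ε * q D x / (2 * Δq)) ≤
      Real.exp (ε / 2) * Real.exp (ε * q D' x / (2 * Δq)) := by
    intro x
    rw [← Real.exp_add]
    apply Real.exp_le_exp.2
    have h1 : q D x - q D' x ≤ Δq := (abs_le.1 (hsens D D' hDD' x)).2
    have : ε * q D x / (2 * Δq) - ε * q D' x / (2 * Δq) ≤ ε / 2 := by
      rw [div_sub_div_same, ← mul_sub]
      rw [div_le_div_iff₀ (by linarith) (by norm_num)]
      nlinarith [mul_le_mul_of_nonneg_left h1 hε]
    linarith
  have pt' : ∀ x : O, Real.exp (ε * q D' x / (2 * Δq)) ≤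
      Real.exp (ε / 2) * Real.exp (ε * q D x / (2 * Δq)) := by
    intro x
    rw [← Real.exp_add]
    apply Real.exp_le_exp.2
    have h1 : q D' x - q D x ≤ Δq := by
      have := (abs_le.1 (hsens D D' hDD' x)).1; linarith
    have : ε * q D' x / (2 * Δq) - ε * q D x / (2 * Δq) ≤ ε / 2 := by
      rw [div_sub_div_same, ← mul_sub]
      rw [div_le_div_iff₀ (by linarith) (by norm_num)]
      nlinarith [mul_le_mul_of_nonneg_left h1 hε]
    linarith
  set S := ∑ o' : O, Real.exp (ε * q D o' / (2 * Δq)) with hS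
  set S' := ∑ o' : O, Real.exp (ε * q D' o' / (2 * Δq)) with hS'
  have hSpos : 0 < S := Finset.sum_pos (fun i _ => Real.exp_pos _) Finset.univ_nonempty
  have hS'pos : 0 < S' := Finset.sum_pos (fun i _ => Real.exp_pos _) Finset.univ_nonempty
  have hsum : S' ≤ Real.exp (ε / 2) * S := by
    rw [Finset.mul_sum]
    exact Finset.sum_le_sum fun i _ => pt' i
  have hnum : Real.exp (ε * q D o / (2 * Δq)) ≤
      Real.exp (ε / 2) * Real.exp (ε * q D' o / (2 * Δq)) := pt o
  rw [div_le_iff₀ hSpos]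
  have hε2 : (0:ℝ) < Real.exp (ε / 2) := Real.exp_pos _
  calc Real.exp (ε * q D o / (2 * Δq))
      ≤ Real.exp (ε / 2) * Real.exp (ε * q D' o / (2 * Δq)) := hnum
    _ = Real.exp (ε / 2) * Real.exp (ε * q D' o / (2 * Δq)) / S' * S' := by
        field_simp
    _ ≤ Real.exp (ε / 2) * Real.exp (ε * q D' o / (2 * Δq)) / S' *
        (Real.exp (ε / 2) * S) := by
        apply mul_le_mul_of_nonneg_left hsum
        positivity
    _ = Real.exp ε * (Real.exp (ε * q D' o / (2 * Δq)) / S') * S := by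
        rw [show Real.exp ε = Real.exp (ε/2) * Real.exp (ε/2) from by
          rw [← Real.exp_add]; ring_nf]
        ring
end
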